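/- Let a, b > 0 and c, d ∈ (−1,1). Let r₁ = (1/((1−c²)(1−d²)))·[[cd−1, c(1−cd), d−c],[d−c, 1−cd, cd−1],[0, 1−c², 0]], r₂ = [[−1−cd, c+d, d(1+cd)],[0, 0, d²−1],[−c−d, 1+cd, 1+cd]], Σ = [[1,0,0],[0,(1+b²)/(2ab),(b²−1)/(2b)],[0,(b²−1)/(2b), a(1+b²)/(2b)]], and R₂ = Σ⁻¹·r₂·Σ. Then trace(r₁·R₂) − trace(r₁²·R₂²) = ψ(a,b,c,d)/(4a²b²(1−c²)(1−d²)), where ψ(a,b,c,d) = (a²−1)(b²+1)(a²b²+a²+ab²−a+b²+1)(c²+d²−2c²d²) + a(b²−1)(a²b²+a²+2ab²−4ab−2a+b²+1)·c·d·(c²−d²). -/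
import Mathlib


open Matrix

noncomputable def r1 (c d : ℝ) : Matrix (Fin 3) (Fin 3) ℝ :=
  (1 / ((1 - c^2) * (1 - d^2))) •
    !![c*d - 1, c*(1 - c*d), d - c;
       d - c, 1 - c*d, c*d - 1;
       0, 1 - c^2, 0]

def r2 (c d : ℝ) : Matrix (Fin 3) (Fin 3) ℝ :=
  !![-1 - c*d, c + d, d*(1 + c*d);
     0, 0, d^2 - 1;
     -c - d, 1 + c*d, 1 + c*d]

noncomputable def Sig (a b : ℝ) : Matrix (Fin 3) (Fin 3) ℝ :=
  !![1, 0, 0;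
     0, (1 + b^2) / (2*a*b), (b^2 - 1) / (2*b);
     0, (b^2 - 1) / (2*b), a*(1 + b^2) / (2*b)]

noncomputable def psi (a b c d : ℝ) : ℝ :=
  (a^2 - 1) * (b^2 + 1) * (a^2*b^2 + a^2 + a*b^2 - a + b^2 + 1) * (c^2 + d^2 - 2*c^2*d^2)
    + a * (b^2 - 1) * (a^2*b^2 + a^2 + 2*a*b^2 - 4*a*b - 2*a + b^2 + 1) * c * d * (c^2 - d^2)

noncomputable def SigInv (a b : ℝ) : Matrix (Fin 3) (Fin 3) ℝ :=
  !![1, 0, 0;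
     0, a*(1 + b^2) / (2*b), -((b^2 - 1) / (2*b));
     0, -((b^2 - 1) / (2*b)), (1 + b^2) / (2*a*b)]

lemma sig_inv_eq (a b : ℝ) (ha : a ≠ 0) (hb : b ≠ 0) : (Sig a b)⁻¹ = SigInv a b := by
  apply inv_eq_right_inv
  show Sig a b * SigInv a b = 1
  ext i j
  fin_cases i <;> fin_cases j <;>
    simp [Sig, SigInv, Matrix.mul_apply, Fin.sum_univ_three, Matrix.one_apply,
      Matrix.vecHead, Matrix.vecTail] <;>
    (try field_simp) <;> (try ring)

set_option maxHeartbeats 4000000 in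
theorem duality_equation_numerator (a b c d : ℝ) (ha : 0 < a) (hb : 0 < b)
    (hc : c ∈ Set.Ioo (-1 : ℝ) 1) (hd : d ∈ Set.Ioo (-1 : ℝ) 1) :
    (r1 c d * ((Sig a b)⁻¹ * r2 c d * Sig a b)).trace
      - ((r1 c d)^2 * ((Sig a b)⁻¹ * r2 c d * Sig a b)^2).trace
      = psi a b c d / (4*a^2*b^2*(1 - c^2)*(1 - d^2)) := by
  have ha' : a ≠ 0 := ha.ne'
  have hb' : b ≠ 0 := hb.ne'
  have hc2 : (1 : ℝ) - c^2 ≠ 0 := by nlinarith [hc.1, hc.2]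
  have hd2 : (1 : ℝ) - d^2 ≠ 0 := by nlinarith [hd.1, hd.2]
  rw [sig_inv_eq a b ha' hb', pow_two, pow_two]
  rw [r1, r2, Sig, SigInv, psi]
  simp only [Matrix.smul_mul, Matrix.mul_smul, Matrix.trace_smul, smul_eq_mul]
  simp [Matrix.trace_fin_three, Matrix.mul_apply, Fin.sum_univ_three]
  field_simp
  ring
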